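/- arXiv:1708.03209 — 2 statements merged into one kernel-verified Lean document; each statement's English description precedes it below -/
import Mathlib

section
/- The rewrite system consisting of rules R1 and R4–R13 terminates: every sequence of rule applications starting from a commitment specification (via R13) reaches, in finitely many steps, a state in which no rule is applicable, hence a commitment alignment protocol exists for every commitment specification and input protocol. -/
/-- Lifecycle event kinds of a commitment. -/
inductive LifeKind | created | detached | discharged | expired | violated

/-- Expressions of Cupid's grammar: base message events, nested lifecycle
events `life k x y Cre Det Dis`, timed events `E[s,d]` (with start and
deadline events), conjunction, disjunction, and exception. -/
inductive Expr (B R : Type) : Type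
  | base : B → Expr B R
  | life : LifeKind → R → R → Expr B R → Expr B R → Expr B R → Expr B R
  | timed : Expr B R → Expr B R → Expr B R → Expr B R
  | conj : Expr B R → Expr B R → Expr B R
  | disj : Expr B R → Expr B R → Expr B R
  | exc : Expr B R → Expr B R → Expr B R

/-- An alignment instruction `al(a, E, b)`. -/
abbrev Instr (B R : Type) := R × Expr B R × R

/-- One application of a rewrite rule (R1, R4–R12) to a multiset of
pending alignment instructions. -/
inductive Step {B R : Type} : Multiset (Instr B R) → Multiset (Instr B R) → Prop
  | r1 (a b : R) (m : B) (s : Multiset (Instr B R)) :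
      Step ((a, Expr.base m, b) ::ₘ s) s
  | r4 (a b : R) (E S D : Expr B R) (s : Multiset (Instr B R)) :
      Step ((a, Expr.timed E S D, b) ::ₘ s)
        ((a, E, b) ::ₘ (a, S, b) ::ₘ (a, D, b) ::ₘ s)
  | r5 (a b : R) (L Rr : Expr B R) (s : Multiset (Instr B R)) :
      Step ((a, Expr.conj L Rr, b) ::ₘ s) ((a, L, b) ::ₘ (a, Rr, b) ::ₘ s)
  | r6 (a b : R) (L Rr : Expr B R) (s : Multiset (Instr B R)) :
      Step ((a, Expr.disj L Rr, b) ::ₘ s) ((a, L, b) ::ₘ (a, Rr, b) ::ₘ s)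
  | r7 (a b : R) (L Rr : Expr B R) (s : Multiset (Instr B R)) :
      Step ((a, Expr.exc L Rr, b) ::ₘ s) ((a, L, b) ::ₘ (b, Rr, a) ::ₘ s)
  | r8 (a b x y : R) (C D U : Expr B R) (s : Multiset (Instr B R)) :
      Step ((a, Expr.life .created x y C D U, b) ::ₘ s) ((a, C, b) ::ₘ s)
  | r9 (a b x y : R) (C D U : Expr B R) (s : Multiset (Instr B R)) :
      Step ((a, Expr.life .detached x y C D U, b) ::ₘ s)
        ((a, Expr.conj C D, b) ::ₘ s)
  | r10 (a b x y : R) (C D U : Expr B R) (s : Multiset (Instr B R)) :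
      Step ((a, Expr.life .discharged x y C D U, b) ::ₘ s)
        ((a, Expr.disj (Expr.conj C U) (Expr.conj D U), b) ::ₘ s)
  | r11 (a b x y : R) (C D U : Expr B R) (s : Multiset (Instr B R)) :
      Step ((a, Expr.life .expired x y C D U, b) ::ₘ s)
        ((a, Expr.exc C D, b) ::ₘ s)
  | r12 (a b x y : R) (C D U : Expr B R) (s : Multiset (Instr B R)) :
      Step ((a, Expr.life .violated x y C D U, b) ::ₘ s)
        ((a, Expr.exc (Expr.conj C D) U, b) ::ₘ s)

/-- Rule R13: the initial multiset of alignment instructions generated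
from the commitment `c(x, y, Cre, Det, Dis)` (debtor `x`, creditor `y`). -/
def initInstrs {B R : Type} (x y : R) (Cre Det Dis : Expr B R) :
    Multiset (Instr B R) :=
  {(y, Expr.life .created x y Cre Det Dis, x),
   (y, Expr.life .detached x y Cre Det Dis, x),
   (y, Expr.life .violated x y Cre Det Dis, x),
   (x, Expr.life .discharged x y Cre Det Dis, y),
   (x, Expr.life .expired x y Cre Det Dis, y)}

def wt {B R : Type} : Expr B R → ℕ
  | .base _ => 1
  | .life _ _ _ C D U => 4 + wt C + wt D + 2 * wt U
  | .timed E S D => 1 + wt E + wt S + wt D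
  | .conj L Rr => 1 + wt L + wt Rr
  | .disj L Rr => 1 + wt L + wt Rr
  | .exc L Rr => 1 + wt L + wt Rr

def Wm {B R : Type} (s : Multiset (Instr B R)) : ℕ :=
  (s.map (fun i => wt i.2.1)).sum

lemma step_dec {B R : Type} {s t : Multiset (Instr B R)} (h : Step s t) :
    Wm t < Wm s := by
  cases h <;> simp [Wm, wt] <;> omega

lemma exists_nf {B R : Type} : ∀ s : Multiset (Instr B R),
    ∃ t, Relation.ReflTransGen Step s t ∧ ∀ u, ¬ Step t u := by
  intro s
  by_cases h : ∃ u, Step s u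
  · obtain ⟨u, hu⟩ := h
    obtain ⟨t, ht, hnf⟩ := exists_nf u
    exact ⟨t, Relation.ReflTransGen.head hu ht, hnf⟩
  · exact ⟨s, Relation.ReflTransGen.refl, fun u hu => h ⟨u, hu⟩⟩
termination_by s => Wm s
decreasing_by exact step_dec hu

/-- The Tosca rewrite system terminates: there is no infinite sequence of
rule applications starting from the instructions generated from a
commitment specification, and some state in which no rule applies is
reachable; hence a commitment alignment protocol exists for every
commitment specification. -/
theorem tosca_rewrite_terminates {B R : Type} (x y : R) (Cre Det Dis : Expr B R) :
    (¬ ∃ f : ℕ → Multiset (Instr B R),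
        f 0 = initInstrs x y Cre Det Dis ∧ ∀ n, Step (f n) (f (n + 1))) ∧
    (∃ s : Multiset (Instr B R),
        Relation.ReflTransGen Step (initInstrs x y Cre Det Dis) s ∧
        ∀ t, ¬ Step s t) := by
  constructor
  · rintro ⟨f, -, hf⟩
    have key : ∀ n, Wm (f n) + n ≤ Wm (f 0) := by
      intro n
      induction n with
      | zero => simp
      | succ n ih => have := step_dec (hf n); omega
    have := key (Wm (f 0) + 1)
    omega
  · exact exists_nf _
end

section
/- Alignment rectifiability for the atomic case: suppose in a history vector H the sender s of a Base message instance m (with s ≠ b and receiver r ≠ b) has m in its history, but role b does not have m in its model; then appending to H a single forwarding message instance of schema V(m', b) — sent by s, received by b, carrying m's parameters as in-parameters and a fresh binding for its unique out-parameter — yields a history vector H'' in which b's model contains m, and H'' remains a history vector (the send-before-receive condition holds). -/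
/-- A message instance of the operationalization protocol. -/
structure Msg13 (B N Role Param Val : Type) where
  name : B ⊕ N
  sender : Role
  receiver : Role
  params : List Param
  vals : List Val

/-- A Base-named instance, as it appears in a role's model. -/
structure BInst13 (B Param Val : Type) where
  name : B
  params : List Param
  vals : List Val

/-- `H` is a history vector: every reception appears in the sender's
history (send-before-receive). -/
def HV13 {B N Role Param Val : Type}
    (H : Role → List (Msg13 B N Role Param Val)) : Prop :=
  ∀ (ρ : Role) (m : Msg13 B N Role Param Val),
    m ∈ H ρ → m.receiver = ρ → m ∈ H m.sender

/-- A role's model: Base messages are kept; a forwarding message is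
replaced by the original message it forwards (name via `V⁻¹`, dropping
the forwarding schema's trailing out-parameter and its binding). -/
def model13 {B N Role Param Val : Type} (Vinv : N → Role → B)
    (Hρ : List (Msg13 B N Role Param Val)) : List (BInst13 B Param Val) :=
  Hρ.map (fun m => match m.name with
    | Sum.inl bn => ⟨bn, m.params, m.vals⟩
    | Sum.inr nn => ⟨Vinv nn m.receiver, m.params.dropLast, m.vals.dropLast⟩)

/-- Alignment rectifiability, atomic case: if the sender `s` of a Base
message `m` (with `s ≠ b` and receiver `r ≠ b`) has `m` in its history
but role `b`'s model lacks `m`, then appending a single forwarding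
message of schema `V(m.name, b)` — sent by `s`, received by `b`, carrying
`m`'s parameters as in-parameters plus a fresh binding for its unique
out-parameter — yields a history vector `H''` in which `b`'s model
contains `m`, and `H''` still satisfies the send-before-receive
condition. -/
theorem atomic_rectifiability {B N Role Param Val : Type}
    [DecidableEq Role]
    (V : B × Role → N) (Vinv : N → Role → B)
    (hVinv : ∀ (mb : B) (b : Role), Vinv (V (mb, b)) b = mb)
    (H : Role → List (Msg13 B N Role Param Val)) (hHV : HV13 H)
    (s b : Role) (m : Msg13 B N Role Param Val) (mb : B)
    (hname : m.name = Sum.inl mb) (hsender : m.sender = s)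
    (hsb : s ≠ b) (hrb : m.receiver ≠ b)
    (hin : m ∈ H s)
    (hlack : (⟨mb, m.params, m.vals⟩ : BInst13 B Param Val) ∉ model13 Vinv (H b))
    (pid : Param) (w : Val) :
    ∃ H'' : Role → List (Msg13 B N Role Param Val),
      (let fwd : Msg13 B N Role Param Val :=
        ⟨Sum.inr (V (mb, b)), s, b, m.params ++ [pid], m.vals ++ [w]⟩
       H'' = fun ρ => if ρ = s then H s ++ [fwd]
                      else if ρ = b then H b ++ [fwd] else H ρ) ∧
      (⟨mb, m.params, m.vals⟩ : BInst13 B Param Val) ∈ model13 Vinv (H'' b) ∧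
      HV13 H'' := by
  classical
  set fwd : Msg13 B N Role Param Val :=
    ⟨Sum.inr (V (mb, b)), s, b, m.params ++ [pid], m.vals ++ [w]⟩ with hfwd
  set H'' : Role → List (Msg13 B N Role Param Val) :=
    fun ρ => if ρ = s then H s ++ [fwd] else if ρ = b then H b ++ [fwd] else H ρ
    with hH''
  have hsup : ∀ x, H x ⊆ H'' x := by
    intro x
    simp only [hH'']
    split_ifs with h1 h2
    · subst h1; exact List.subset_append_left _ _
    · subst h2; exact List.subset_append_left _ _
    · exact fun _ h => h
  have hHb : H'' b = H b ++ [fwd] := by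
    simp only [hH'', if_neg (Ne.symm hsb), if_pos rfl, if_true]
  refine ⟨H'', rfl, ?_, ?_⟩
  · rw [hHb]
    simp only [model13, List.map_append, List.mem_append]
    right
    simp [hfwd, hVinv, List.dropLast_concat]
  · intro ρ n hn hrecv
    by_cases hold : n ∈ H ρ
    · exact hsup n.sender (hHV ρ n hold hrecv)
    · have hnf : n = fwd := by
        simp only [hH''] at hn
        split_ifs at hn <;> simp_all
      subst hnf
      have : fwd.sender = s := rfl
      rw [this]
      simp only [hH'', if_pos rfl]
      exact List.mem_append_right _ (List.mem_singleton_self _)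
end
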